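/- arXiv:2505.08010 — 7 statements merged into one kernel-verified Lean document; each statement's English description precedes it below -/
import Mathlib

section
/- Let Ω be an open subset of ℝⁿ and let f : ℝⁿ → ℝ be continuous on Ω and differentiable at H^k-almost every point of Ω, where k is a nonnegative integer with k < n and H^k denotes k-dimensional Hausdorff measure. Then the essential supremum of ‖∇f‖ over Ω with respect to H^k equals the essential supremum of ‖∇f‖ over Ω with respect to H^n (i.e. Lebesgue measure on ℝⁿ). -/
/-! If `‖f'‖ ≤ C` Lebesgue-a.e. on `Ω`, then `f` is `C`-Lipschitz on every ball `B ⊆ Ω`. Indeed,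
fix a direction `v`: projecting along `v` onto a complementary hyperplane does not increase
`H^{n-1}`, so almost every line parallel to `v` misses the `H^{n-1}`-null set where `f` is not
differentiable, and by Fubini it meets `{‖f'‖ > C}` in a null set. Integrating `f'` along such
segments gives the Lipschitz bound on a dense set of segments, hence on all of them by continuity.
So `‖f'‖ ≤ C` at every point of `Ω`, which bounds the `H^k`-essential supremum by the Lebesgue
one; the reverse inequality holds because `H^k`-null sets are Lebesgue-null when `k ≤ n`. -/

open MeasureTheory ENNReal NNReal Filter Set Module Topology

theorem hausdorffMeasure_absolutelyContinuous {X : Type*} [EMetricSpace X] [MeasurableSpace X]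
    [BorelSpace X] {d₁ d₂ : ℝ} (h : d₁ ≤ d₂) : (μH[d₂] : Measure X) ≪ μH[d₁] :=
  fun s hs => nonpos_iff_eq_zero.1 ((Measure.hausdorffMeasure_mono h s).trans hs.le)

section Haar

variable {E : Type*} [NormedAddCommGroup E] [NormedSpace ℝ E] [FiniteDimensional ℝ E]
  [MeasurableSpace E] [BorelSpace E] (μ : Measure E) [μ.IsAddHaarMeasure]

theorem addHaar_absolutelyContinuous_hausdorffMeasure {d : ℝ} (hd : d ≤ finrank ℝ E) :
    μ ≪ μH[d] := by
  refine .trans ?_ (hausdorffMeasure_absolutelyContinuous hd)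
  rw [Measure.isAddLeftInvariant_eq_smul μ μH[(finrank ℝ E : ℝ)]]
  exact Measure.smul_absolutelyContinuous

theorem ae_ae_add_smul_of_ae {p : E → Prop} (hp : ∀ᵐ x ∂μ, p x) (v : E) :
    ∀ᵐ w ∂μ, ∀ᵐ s : ℝ, p (w + s • v) := by
  obtain ⟨t, hpt, ht, ht0⟩ := exists_measurable_superset_of_null hp
  have := (ae_ae_add_linearMap_mem_iff (LinearMap.toSpanSingleton ℝ E v) volume μ
    ht.compl).2 (compl_mem_ae_iff.2 ht0)
  filter_upwards [this] with w hw
  filter_upwards [hw] with s hs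
  exact of_not_not fun h => hs (hpt (by simpa using h))

theorem ae_forall_add_smul_notMem_of_hausdorffMeasure_null {v : E} (hv : v ≠ 0) {N : Set E}
    (hN : μH[(finrank ℝ E : ℝ) - 1] N = 0) : ∀ᵐ w ∂μ, ∀ t : ℝ, w + t • v ∉ N := by
  obtain ⟨K, hK⟩ := Submodule.exists_isCompl (ℝ ∙ v)
  set P : E →ₗ[ℝ] K := Submodule.projectionOnto K (ℝ ∙ v) hK.symm
  have hKdim : (finrank ℝ K : ℝ) = finrank ℝ E - 1 := by
    have := Submodule.finrank_add_eq_of_isCompl hK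
    rw [finrank_span_singleton hv] at this
    rw [← this]; push_cast; ring
  have hPN : μH[(finrank ℝ K : ℝ)] (P '' N) = 0 := by
    rw [← hKdim] at hN
    refine nonpos_iff_eq_zero.1 ?_
    calc μH[(finrank ℝ K : ℝ)] (P '' N)
        ≤ (‖LinearMap.toContinuousLinearMap P‖₊ : ℝ≥0∞) ^ (finrank ℝ K : ℝ) *
            μH[(finrank ℝ K : ℝ)] N :=
          (LinearMap.toContinuousLinearMap P).lipschitz.hausdorffMeasure_image_le
            (Nat.cast_nonneg _) N
      _ = 0 := by rw [hN, mul_zero]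
  have hPN' : Measure.addHaar (P '' N) = 0 :=
    addHaar_absolutelyContinuous_hausdorffMeasure _ le_rfl hPN
  have hae : ∀ᵐ w ∂μ, P w ∈ (toMeasurable Measure.addHaar (P '' N))ᶜ := by
    rw [ae_comp_linearMap_mem_iff P μ Measure.addHaar
      (Submodule.projectionOnto_surjective hK.symm) (measurableSet_toMeasurable _ _).compl]
    exact compl_mem_ae_iff.2 (by rwa [measure_toMeasurable])
  filter_upwards [hae] with w hw t hmem
  refine hw (subset_toMeasurable _ _ ⟨_, hmem, ?_⟩)
  simp [P, Submodule.projectionOnto_apply_of_mem_right hK.symm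
    (Submodule.mem_span_singleton_self v)]

end Haar

theorem norm_sub_le_of_ae_norm_deriv_le {F : Type*} [NormedAddCommGroup F] [NormedSpace ℝ F]
    [CompleteSpace F] {g : ℝ → F} {a b C : ℝ} (hab : a ≤ b)
    (hg : ∀ s ∈ Icc a b, DifferentiableAt ℝ g s)
    (hC : ∀ᵐ s, s ∈ Ioc a b → ‖deriv g s‖ ≤ C) :
    ‖g b - g a‖ ≤ C * (b - a) := by
  have hint : IntervalIntegrable (deriv g) volume a b :=
    (intervalIntegrable_iff_integrableOn_Ioc_of_le hab).2 <|
      Measure.integrableOn_of_bounded measure_Ioc_lt_top.ne (aestronglyMeasurable_deriv g _)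
        ((ae_restrict_iff' measurableSet_Ioc).2 hC)
  rw [← intervalIntegral.integral_eq_sub_of_hasDerivAt
    (fun s hs => (hg s (uIcc_of_le hab ▸ hs)).hasDerivAt) hint, ← abs_of_nonneg (sub_nonneg.2 hab)]
  exact intervalIntegral.norm_integral_le_of_norm_le_const_ae (by rwa [uIoc_of_le hab])

section Lipschitz

variable {E F : Type*} [NormedAddCommGroup E] [NormedSpace ℝ E] [NormedAddCommGroup F]
  [NormedSpace ℝ F] [CompleteSpace F]

theorem norm_image_add_sub_le_of_ae_nnnorm_fderiv_le {f : E → F} {w v : E} {C : ℝ≥0}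
    (hdiff : ∀ s ∈ Icc (0 : ℝ) 1, DifferentiableAt ℝ f (w + s • v))
    (hC : ∀ᵐ s : ℝ, s ∈ Icc (0 : ℝ) 1 → ‖fderiv ℝ f (w + s • v)‖₊ ≤ C) :
    ‖f (w + v) - f w‖ ≤ C * ‖v‖ := by
  have hderiv : ∀ s ∈ Icc (0 : ℝ) 1,
      HasDerivAt (fun s : ℝ => f (w + s • v)) (fderiv ℝ f (w + s • v) v) s := fun s hs => by
    simpa [Function.comp_def] using (hdiff s hs).hasFDerivAt.comp_hasDerivAt s
      (((hasDerivAt_id s).smul_const v).const_add w)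
  simpa using norm_sub_le_of_ae_norm_deriv_le zero_le_one
    (fun s hs => (hderiv s hs).differentiableAt) (C := C * ‖v‖) <| by
      filter_upwards [hC] with s hs hsI
      rw [(hderiv s (Ioc_subset_Icc_self hsI)).deriv]
      exact (ContinuousLinearMap.le_opNorm _ v).trans
        (by gcongr; exact_mod_cast hs (Ioc_subset_Icc_self hsI))

variable [FiniteDimensional ℝ E] [MeasurableSpace E] [BorelSpace E] (μ : Measure E)
  [μ.IsAddHaarMeasure]

theorem Convex.lipschitzOnWith_of_ae_nnnorm_fderiv_le {U : Set E} (hUc : Convex ℝ U)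
    (hU : IsOpen U) {f : E → F} (hf : ContinuousOn f U)
    (hdiff : ∀ᵐ x ∂(μH[(finrank ℝ E : ℝ) - 1].restrict U), DifferentiableAt ℝ f x) {C : ℝ≥0}
    (hC : ∀ᵐ x ∂μ.restrict U, ‖fderiv ℝ f x‖₊ ≤ C) : LipschitzOnWith C f U := by
  refine LipschitzOnWith.of_dist_le_mul fun z hz y hy => ?_
  rw [dist_eq_norm, dist_eq_norm]
  set v := z - y
  rcases eq_or_ne v 0 with hv | hv
  · simp [v, sub_eq_zero.1 hv]
  have hN : μH[(finrank ℝ E : ℝ) - 1] {x | ¬(x ∈ U → DifferentiableAt ℝ f x)} = 0 :=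
    ae_iff.1 ((ae_restrict_iff' hU.measurableSet).1 hdiff)
  have hgood : ∀ᵐ w ∂μ, (∀ t : ℝ, w + t • v ∉ {x | ¬(x ∈ U → DifferentiableAt ℝ f x)}) ∧
      ∀ᵐ s : ℝ, w + s • v ∈ U → ‖fderiv ℝ f (w + s • v)‖₊ ≤ C :=
    (ae_forall_add_smul_notMem_of_hausdorffMeasure_null μ hv hN).and
      (ae_ae_add_smul_of_ae μ ((ae_restrict_iff' hU.measurableSet).1 hC) v)
  have hnear : ∀ᶠ w in 𝓝 y, ∀ s ∈ Icc (0 : ℝ) 1, w + s • v ∈ U :=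
    isCompact_Icc.eventually_forall_of_forall_eventually fun s hs =>
      (continuous_fst.add (continuous_snd.smul continuous_const)).continuousAt.preimage_mem_nhds
        (hU.mem_nhds (hUc.add_smul_sub_mem hy hz hs))
  have hfreq : ∃ᶠ w in 𝓝 y, ‖f (w + v) - f w‖ ≤ C * ‖v‖ :=
    ((mem_closure_iff_frequently.1 (μ.dense_of_ae hgood y)).and_eventually hnear).mono
      fun w ⟨⟨hw, hwC⟩, hseg⟩ => norm_image_add_sub_le_of_ae_nnnorm_fderiv_le
        (fun s hs => not_not.1 (hw s) (hseg s hs))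
        (hwC.mono fun s hs hsI => hs (hseg s hsI))
  have hcont : ContinuousAt (fun w => ‖f (w + v) - f w‖) y := by
    have hyz : y + v = z := add_sub_cancel y z
    refine ((ContinuousAt.comp ?_ (continuousAt_id.add continuousAt_const)).sub ?_).norm
    · change ContinuousAt f (y + v); rw [hyz]; exact hf.continuousAt (hU.mem_nhds hz)
    · exact hf.continuousAt (hU.mem_nhds hy)
  simpa [v] using le_of_tendsto_of_frequently hcont.tendsto hfreq

theorem nnnorm_fderiv_le_of_ae_nnnorm_fderiv_le {Ω : Set E} (hΩ : IsOpen Ω) {f : E → F}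
    (hf : ContinuousOn f Ω)
    (hdiff : ∀ᵐ x ∂(μH[(finrank ℝ E : ℝ) - 1].restrict Ω), DifferentiableAt ℝ f x) {C : ℝ≥0}
    (hC : ∀ᵐ x ∂μ.restrict Ω, ‖fderiv ℝ f x‖₊ ≤ C) {x : E} (hx : x ∈ Ω) :
    ‖fderiv ℝ f x‖₊ ≤ C := by
  obtain ⟨ε, hε, hball⟩ := Metric.isOpen_iff.1 hΩ x hx
  have hlip := (convex_ball x ε).lipschitzOnWith_of_ae_nnnorm_fderiv_le μ Metric.isOpen_ball
    (hf.mono hball) (ae_restrict_of_ae_restrict_of_subset hball hdiff)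
    (ae_restrict_of_ae_restrict_of_subset hball hC)
  exact_mod_cast norm_fderiv_le_of_lipschitzOn ℝ (Metric.ball_mem_nhds x hε) hlip

end Lipschitz

/-- **Main theorem.** If `f : ℝⁿ → ℝ` is continuous on an open set `Ω` and differentiable at
`H^k`-a.e. point of `Ω` for a nonnegative integer `k < n`, then the essential supremum of
`‖∇f‖` over `Ω` with respect to the `k`-dimensional Hausdorff measure equals the essential
supremum with respect to Lebesgue measure (= `H^n`). -/
theorem stmt_0 {n k : ℕ} (hk : k < n)
    (Ω : Set (EuclideanSpace ℝ (Fin n))) (hΩ : IsOpen Ω)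
    (f : EuclideanSpace ℝ (Fin n) → ℝ) (hf : ContinuousOn f Ω)
    (hdiff : ∀ᵐ x ∂((μH[(k : ℝ)] : Measure (EuclideanSpace ℝ (Fin n))).restrict Ω),
      DifferentiableAt ℝ f x) :
    essSup (fun x => (‖fderiv ℝ f x‖₊ : ℝ≥0∞))
        ((μH[(k : ℝ)] : Measure (EuclideanSpace ℝ (Fin n))).restrict Ω) =
      essSup (fun x => (‖fderiv ℝ f x‖₊ : ℝ≥0∞)) (volume.restrict Ω) := by
  have hkn : (k : ℝ) ≤ (finrank ℝ (EuclideanSpace ℝ (Fin n)) : ℝ) - 1 := by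
    rw [finrank_euclideanSpace_fin, le_sub_iff_add_le]; exact_mod_cast hk
  refine le_antisymm ?_ <| essSup_mono_measure <| Measure.AbsolutelyContinuous.restrict
    (addHaar_absolutelyContinuous_hausdorffMeasure volume (by linarith)) Ω
  set M := essSup (fun x => (‖fderiv ℝ f x‖₊ : ℝ≥0∞)) (volume.restrict Ω)
  rcases eq_top_or_lt_top M with hM | hM
  · exact hM ▸ le_top
  have hC : ∀ᵐ x ∂volume.restrict Ω, ‖fderiv ℝ f x‖₊ ≤ M.toNNReal :=
    (ae_le_essSup _).mono fun x hx => by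
      simpa using ENNReal.toNNReal_mono hM.ne hx
  refine essSup_le_of_ae_le _ <| (ae_restrict_iff' hΩ.measurableSet).2 <|
    .of_forall fun x hx => ?_
  rw [← ENNReal.coe_toNNReal hM.ne, ENNReal.coe_le_coe]
  exact nnnorm_fderiv_le_of_ae_nnnorm_fderiv_le volume hΩ hf
    (((hausdorffMeasure_absolutelyContinuous hkn).restrict Ω).ae_le hdiff) hC hx
end

section
/- Let Ω be an open subset of ℝ and let f : ℝ → ℝ be differentiable at every point of Ω. Then the supremum over Ω of |f'| equals the essential supremum over Ω of |f'| with respect to Lebesgue measure. -/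
/-!
Only `sup ≤ essSup` needs an argument. If `‖f'‖ ≤ C` almost everywhere on `Ω`, then `f'` is
bounded, hence integrable, on every interval inside `Ω`; since `f` is differentiable at every
point of such an interval, the fundamental theorem of calculus applies and makes `f` locally
`C`-Lipschitz around each point of `Ω`, which forces `‖f'(x)‖ ≤ C` everywhere on `Ω`.
-/

open MeasureTheory ENNReal NNReal Set intervalIntegral
open scoped Interval

variable {E : Type*} [NormedAddCommGroup E] [NormedSpace ℝ E] [CompleteSpace E]

theorem norm_sub_le_of_ae_norm_deriv_le_s2 {f : ℝ → E} {a b C : ℝ}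
    (hf : ∀ x ∈ uIcc a b, DifferentiableAt ℝ f x) (hC : ∀ᵐ x, x ∈ Ι a b → ‖deriv f x‖ ≤ C) :
    ‖f b - f a‖ ≤ C * |b - a| := by
  have hint : IntervalIntegrable (deriv f) volume a b :=
    intervalIntegrable_iff.2 <| Measure.integrableOn_of_bounded measure_Ioc_lt_top.ne
      (aestronglyMeasurable_deriv f _) ((ae_restrict_iff' measurableSet_uIoc).2 hC)
  rw [← integral_eq_sub_of_hasDerivAt (fun x hx => (hf x hx).hasDerivAt) hint]
  exact norm_integral_le_of_norm_le_const_ae hC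

theorem IsOpen.norm_deriv_le_of_ae_norm_deriv_le {Ω : Set ℝ} (hΩ : IsOpen Ω) {f : ℝ → E}
    {C : ℝ} (hC₀ : 0 ≤ C) (hf : ∀ x ∈ Ω, DifferentiableAt ℝ f x)
    (hC : ∀ᵐ x, x ∈ Ω → ‖deriv f x‖ ≤ C) {x : ℝ} (hx : x ∈ Ω) : ‖deriv f x‖ ≤ C := by
  obtain ⟨δ, hδ, hball⟩ := Metric.isOpen_iff.1 hΩ x hx
  refine norm_deriv_le_of_lip' hC₀ ?_
  filter_upwards [Metric.ball_mem_nhds x hδ] with y hy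
  have hsub : uIcc x y ⊆ Ω :=
    ((convex_ball x δ).ordConnected.uIcc_subset (Metric.mem_ball_self hδ) hy).trans hball
  refine norm_sub_le_of_ae_norm_deriv_le_s2 (fun t ht => hf t (hsub ht)) ?_
  filter_upwards [hC] with t ht htI using ht (hsub (uIoc_subset_uIcc htI))

theorem IsOpen.iSup_enorm_deriv_eq_essSup {Ω : Set ℝ} (hΩ : IsOpen Ω) {f : ℝ → E}
    (hf : ∀ x ∈ Ω, DifferentiableAt ℝ f x) :
    ⨆ x ∈ Ω, ‖deriv f x‖ₑ = essSup (fun x => ‖deriv f x‖ₑ) (volume.restrict Ω) := by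
  set M := essSup (fun x => ‖deriv f x‖ₑ) (volume.restrict Ω)
  refine le_antisymm (iSup₂_le fun x hx => ?_) (essSup_le_of_ae_le _ ?_)
  · rcases eq_top_or_lt_top M with hM | hM
    · exact hM ▸ le_top
    have hbound : ∀ᵐ t, t ∈ Ω → ‖deriv f t‖ ≤ M.toReal := by
      filter_upwards [(ae_restrict_iff' hΩ.measurableSet).1 (ENNReal.ae_le_essSup _)]
        with t ht htΩ
      rw [← ENNReal.ofReal_le_iff_le_toReal hM.ne, ofReal_norm]
      exact ht htΩ
    rw [← ofReal_norm, ← ENNReal.ofReal_toReal hM.ne]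
    exact ENNReal.ofReal_le_ofReal <|
      hΩ.norm_deriv_le_of_ae_norm_deriv_le toReal_nonneg hf hbound hx
  · filter_upwards [ae_restrict_mem hΩ.measurableSet] with y hy
    exact le_iSup₂ (f := fun z (_ : z ∈ Ω) => ‖deriv f z‖ₑ) y hy

/-- If `f : ℝ → ℝ` is differentiable at every point of an open set `Ω ⊆ ℝ`, then the pointwise
supremum of `|f'|` over `Ω` equals the essential supremum of `|f'|` over `Ω` with respect to
Lebesgue measure, both interpreted in `[0, ∞]`. -/
theorem stmt_2 (Ω : Set ℝ) (hΩ : IsOpen Ω) (f : ℝ → ℝ)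
    (hdiff : ∀ x ∈ Ω, DifferentiableAt ℝ f x) :
    (⨆ x ∈ Ω, (‖deriv f x‖₊ : ℝ≥0∞)) =
      essSup (fun x => (‖deriv f x‖₊ : ℝ≥0∞)) (volume.restrict Ω) := by
  simpa only [enorm_eq_nnnorm] using hΩ.iSup_enorm_deriv_eq_essSup hdiff
end

section
/- Let a < b be real numbers and let f : ℝ → ℝ be differentiable at every point of the closed interval [a, b]. Then (f(b) − f(a))/(b − a) is at most the essential supremum of f' over [a, b] with respect to Lebesgue measure. -/
open MeasureTheory Set

/- The derivative of `f` is bounded a.e. by any real `C` above the essential supremum, so the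
mean value inequality in integral form (with the a.e. bound `max f' C` as majorant, which
integrates to `C (b - a)`) gives `f b - f a ≤ C (b - a)`; letting `C` decrease to the essential
supremum gives the claim. -/

theorem coe_le_essSup_coe_of_forall_ae_le {α : Type*} [MeasurableSpace α] {μ : Measure α}
    {g : α → ℝ} {r : ℝ} (h : ∀ C : ℝ, (∀ᵐ x ∂μ, g x ≤ C) → r ≤ C) :
    (r : EReal) ≤ essSup (fun x => (g x : EReal)) μ := by
  by_contra! hlt
  obtain ⟨C, hSC, hCr⟩ := EReal.lt_iff_exists_real_btwn.1 hlt
  have hgC : ∀ᵐ x ∂μ, g x ≤ C :=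
    (ae_le_essSup (f := fun x => (g x : EReal))).mono fun x hx =>
      EReal.coe_le_coe_iff.1 (hx.trans hSC.le)
  exact (EReal.coe_lt_coe_iff.1 hCr).not_ge (h C hgC)

theorem sub_le_mul_of_hasDerivWithinAt_Ioi_of_ae_le {f f' : ℝ → ℝ} {a b C : ℝ} (hab : a ≤ b)
    (hcont : ContinuousOn f (Icc a b))
    (hderiv : ∀ x ∈ Ioo a b, HasDerivWithinAt f (f' x) (Ioi x) x)
    (hle : ∀ᵐ x ∂volume.restrict (Icc a b), f' x ≤ C) :
    f b - f a ≤ C * (b - a) := by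
  have hmax : (fun x => max (f' x) C) =ᵐ[volume.restrict (Icc a b)] fun _ => C := by
    filter_upwards [hle] with x hx using max_eq_right hx
  have hint : ∫ x in a..b, max (f' x) C = C * (b - a) := by
    have hmax' : ∀ᵐ x, x ∈ uIoc a b → max (f' x) C = C := by
      filter_upwards [(ae_restrict_iff' measurableSet_Icc).1 hmax] with x hx hx'
      rw [uIoc_of_le hab] at hx'
      exact hx (Ioc_subset_Icc_self hx')
    rw [intervalIntegral.integral_congr_ae hmax', intervalIntegral.integral_const, smul_eq_mul,
      mul_comm]
  have hmax_int : IntegrableOn (fun x => max (f' x) C) (Icc a b) :=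
    (integrableOn_const measure_Icc_lt_top.ne).congr_fun_ae hmax.symm
  calc f b - f a ≤ ∫ x in a..b, max (f' x) C :=
        intervalIntegral.sub_le_integral_of_hasDeriv_right_of_le hab hcont hderiv hmax_int
          fun x _ => le_max_left _ _
    _ = C * (b - a) := hint

/-- Mean value inequality for everywhere differentiable functions: if `f : ℝ → ℝ` is
differentiable at every point of `[a, b]` with `a < b`, then
`(f b - f a) / (b - a)` is at most the essential supremum of `f'` over `[a, b]`
with respect to Lebesgue measure, valued in the extended reals. -/
theorem stmt_3 {a b : ℝ} (hab : a < b) (f : ℝ → ℝ)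
    (hdiff : ∀ x ∈ Set.Icc a b, DifferentiableAt ℝ f x) :
    (((f b - f a) / (b - a) : ℝ) : EReal) ≤
      essSup (fun x => ((deriv f x : ℝ) : EReal)) (volume.restrict (Set.Icc a b)) := by
  refine coe_le_essSup_coe_of_forall_ae_le fun C hC => ?_
  rw [div_le_iff₀ (sub_pos.2 hab)]
  exact sub_le_mul_of_hasDerivWithinAt_Ioi_of_ae_le hab.le
    (fun x hx => (hdiff x hx).continuousAt.continuousWithinAt)
    (fun x hx => (hdiff x (Ioo_subset_Icc_self hx)).hasDerivAt.hasDerivWithinAt) hC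
end

section
/- Let a < b be real numbers and let v : ℝ → ℝ be differentiable at every point of [a, b] with v'(x) < 0 for Lebesgue-almost every x ∈ [a, b]. Then v is non-increasing on [a, b]: for all x, y ∈ [a, b] with x ≤ y, one has v(y) ≤ v(x). -/
open MeasureTheory

/-- If `v : ℝ → ℝ` is differentiable at every point of `[a, b]` (with `a < b`) and `v' < 0`
Lebesgue-almost everywhere on `[a, b]`, then `v` is non-increasing on `[a, b]`. -/
theorem stmt_4 {a b : ℝ} (hab : a < b) (v : ℝ → ℝ)
    (hdiff : ∀ x ∈ Set.Icc a b, DifferentiableAt ℝ v x)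
    (hneg : ∀ᵐ x ∂(volume.restrict (Set.Icc a b)), deriv v x < 0) :
    ∀ x ∈ Set.Icc a b, ∀ y ∈ Set.Icc a b, x ≤ y → v y ≤ v x := by
  intro x hx y hy hxy
  by_contra hvy
  push_neg at hvy
  -- hvy : v x < v y
  set E : Set ℝ := Set.Icc a b ∩ {t | 0 ≤ deriv v t} with hE
  have hEnull : volume E = 0 := by
    rw [ae_restrict_iff' measurableSet_Icc] at hneg
    have h0 : volume {t | ¬ (t ∈ Set.Icc a b → deriv v t < 0)} = 0 := hneg
    refine measure_mono_null ?_ h0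
    intro t ht
    simp only [Set.mem_setOf_eq, Classical.not_imp, not_lt]
    exact ⟨ht.1, ht.2⟩
  have hImg : volume (v '' E) = 0 := by
    refine addHaar_image_eq_zero_of_differentiableOn_of_addHaar_eq_zero
      (μ := volume) (f := v) (s := E) ?_ hEnull
    intro t ht
    exact (hdiff t ht.1).differentiableWithinAt
  have hcont : ContinuousOn v (Set.Icc a b) := fun t ht =>
    (hdiff t ht).continuousAt.continuousWithinAt
  have hxyIcc : Set.Icc x y ⊆ Set.Icc a b := Set.Icc_subset_Icc hx.1 hy.2
  have hcont' : ContinuousOn v (Set.Icc x y) := hcont.mono hxyIcc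
  -- pick a value c in (v x, v y) not in v '' E
  obtain ⟨c, hcIoo, hcE⟩ : ∃ c ∈ Set.Ioo (v x) (v y), c ∉ v '' E := by
    by_contra h
    push_neg at h
    have hsub : Set.Ioo (v x) (v y) ⊆ v '' E := h
    have h0 := measure_mono_null hsub hImg
    rw [Real.volume_Ioo] at h0
    exact (ENNReal.ofReal_pos.2 (by linarith)).ne' h0
  -- the level set
  set T : Set ℝ := Set.Icc x y ∩ v ⁻¹' {c} with hT
  have hTne : T.Nonempty := by
    obtain ⟨t, ht, hvt⟩ := intermediate_value_Icc hxy hcont'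
      ⟨le_of_lt hcIoo.1, le_of_lt hcIoo.2⟩
    exact ⟨t, ht, hvt⟩
  have hTclosed : IsClosed T :=
    hcont'.preimage_isClosed_of_isClosed isClosed_Icc isClosed_singleton
  have hTbdd : BddAbove T := bddAbove_Icc.mono Set.inter_subset_left
  set z : ℝ := sSup T with hz
  have hzT : z ∈ T := hTclosed.csSup_mem hTne hTbdd
  have hzIcc : z ∈ Set.Icc x y := hzT.1
  have hvz : v z = c := hzT.2
  have hzy : z < y :=
    lt_of_le_of_ne hzIcc.2 (fun h => (ne_of_lt hcIoo.2) (by rw [h] at hvz; exact hvz.symm))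
  -- on (z, y], v t > c
  have hgt : ∀ t ∈ Set.Ioc z y, c < v t := by
    intro t ht
    by_contra hle
    push_neg at hle
    rcases lt_or_eq_of_le hle with hlt | heq
    · -- v t < c < v y : IVT on [t, y] gives a point of T above z
      have htxy : t ∈ Set.Icc x y := ⟨le_trans hzIcc.1 (le_of_lt ht.1), ht.2⟩
      have hcty : ContinuousOn v (Set.Icc t y) :=
        hcont'.mono (Set.Icc_subset_Icc htxy.1 le_rfl)
      obtain ⟨s, hs, hvs⟩ := intermediate_value_Icc ht.2 hcty
        ⟨le_of_lt hlt, le_of_lt hcIoo.2⟩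
      have hsT : s ∈ T := ⟨⟨le_trans htxy.1 hs.1, hs.2⟩, hvs⟩
      have : s ≤ z := le_csSup hTbdd hsT
      exact absurd (lt_of_lt_of_le ht.1 hs.1) (not_lt.2 this)
    · -- v t = c, so t ∈ T but t > z
      have htT : t ∈ T := ⟨⟨le_trans hzIcc.1 (le_of_lt ht.1), ht.2⟩, show v t = c from heq⟩
      exact absurd (le_csSup hTbdd htT) (not_le.2 ht.1)
  -- deriv v z ≥ 0
  have hzab : z ∈ Set.Icc a b := hxyIcc hzIcc
  have hder : HasDerivAt v (deriv v z) z := (hdiff z hzab).hasDerivAt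
  have htendsto : Filter.Tendsto (slope v z) (nhdsWithin z (Set.Ioi z)) (nhds (deriv v z)) :=
    (hasDerivAt_iff_tendsto_slope.1 hder).mono_left
      (nhdsWithin_mono z (fun t ht => ne_of_gt ht))
  have hderiv_nonneg : 0 ≤ deriv v z := by
    refine ge_of_tendsto htendsto ?_
    filter_upwards [Ioo_mem_nhdsGT hzy] with t ht
    have h1 : c < v t := hgt t ⟨ht.1, le_of_lt ht.2⟩
    have h2 : 0 < t - z := sub_pos.2 ht.1
    rw [slope_def_field]
    have : 0 < v t - v z := by rw [hvz]; linarith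
    positivity
  have hzE : z ∈ E := ⟨hzab, hderiv_nonneg⟩
  exact hcE ⟨z, hzE, hvz⟩
end

section
/- Let a < b be real numbers and let v : ℝ → ℝ be a function with v(b) > v(a) such that the set {x ∈ [a, b] : v is differentiable at x and v'(x) < 0} has full Lebesgue measure in [a, b]. Then there exist c, d with a ≤ c < d ≤ b and (v(d) − v(c))/(d − c) ≥ 2 · (v(b) − v(a))/(b − a). -/
open MeasureTheory Set Function

/-- Interval-doubling step: if `v b > v a` and the set of points of `[a, b]` at which `v` is
differentiable with `v' < 0` has full Lebesgue measure in `[a, b]`, then there is a subinterval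
`[c, d] ⊆ [a, b]` on which the difference quotient of `v` is at least twice the one on `[a, b]`. -/
theorem stmt_5 {a b : ℝ} (hab : a < b) (v : ℝ → ℝ) (hv : v a < v b)
    (hfull : volume ((Set.Icc a b) \
      {x ∈ Set.Icc a b | DifferentiableAt ℝ v x ∧ deriv v x < 0}) = 0) :
    ∃ c d : ℝ, a ≤ c ∧ c < d ∧ d ≤ b ∧
      2 * ((v b - v a) / (b - a)) ≤ (v d - v c) / (d - c) := by
  by_contra hcon
  push_neg at hcon
  set Q : ℝ := (v b - v a) / (b - a) with hQdef
  have hba : (0:ℝ) < b - a := by linarith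
  have hQ : 0 < Q := div_pos (by linarith) hba
  -- the auxiliary monotone function
  have key : ∀ c d : ℝ, a ≤ c → c ≤ d → d ≤ b →
      2 * Q * c - v c ≤ 2 * Q * d - v d := by
    intro c d hac hcd hdb
    rcases eq_or_lt_of_le hcd with rfl | hcd
    · exact le_rfl
    · have h1 := hcon c d hac hcd hdb
      rw [div_lt_iff₀ (by linarith)] at h1
      nlinarith
  set p : ℝ → ℝ := fun x => max a (min b x) with hpdef
  have hpa : ∀ x, a ≤ p x := fun x => le_max_left _ _
  have hpb : ∀ x, p x ≤ b := fun x => max_le hab.le (min_le_left _ _)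
  have hpmono : Monotone p := fun x y hxy =>
    max_le_max le_rfl (min_le_min le_rfl hxy)
  have hpid : ∀ x, a ≤ x → x ≤ b → p x = x := by
    intro x hax hxb
    simp [hpdef, min_eq_right hxb, max_eq_right hax]
  set W : ℝ → ℝ := fun x => 2 * Q * p x - v (p x) with hWdef
  have hW : Monotone W := fun x y hxy =>
    key _ _ (hpa x) (hpmono hxy) (hpb y)
  set f := hW.stieltjesFunction with hfdef
  set μ := f.measure with hμdef
  -- values of f at points outside [a,b]
  have hWconst_left : ∀ x, x ≤ a → W x = W a := by
    intro x hx
    have : p x = a := by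
      simp [hpdef, max_eq_left (le_trans (min_le_right _ _) hx)]
    have ha : p a = a := hpid a le_rfl hab.le
    simp [hWdef, this, ha]
  have hWconst_right : ∀ x, b ≤ x → W x = W b := by
    intro x hx
    have : p x = b := by
      simp [hpdef, min_eq_left hx, max_eq_right hab.le]
    have hb : p b = b := hpid b hab.le le_rfl
    simp [hWdef, this, hb]
  have hfval : ∀ x, f x ≤ W b := by
    intro x
    have : f x = rightLim W x := hW.stieltjesFunction_eq x
    rw [this]
    calc rightLim W x ≤ W (max x b + 1) := hW.rightLim_le (by
          have := le_max_left x b; linarith)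
    _ = W b := hWconst_right _ (by have := le_max_right x b; linarith)
  have hfa : f (a-1) = W a := by
    have h1 : f (a-1) = rightLim W (a-1) := hW.stieltjesFunction_eq _
    rw [h1]
    refine le_antisymm ?_ ?_
    · exact hW.rightLim_le (by linarith)
    · have h2 := hW.le_rightLim (le_refl (a-1))
      rwa [hWconst_left _ (by linarith)] at h2
  -- upper bound on the measure of (a,b)
  have hmeas_ub : μ (Ioo a b) ≤ ENNReal.ofReal (W b - W a) := by
    have hsub : Ioo a b ⊆ Ioo (a-1) (b+1) := Ioo_subset_Ioo (by linarith) (by linarith)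
    calc μ (Ioo a b) ≤ μ (Ioo (a-1) (b+1)) := measure_mono hsub
    _ = ENNReal.ofReal (leftLim f (b+1) - f (a-1)) := f.measure_Ioo
    _ ≤ ENNReal.ofReal (W b - W a) := by
        apply ENNReal.ofReal_le_ofReal
        have := f.mono.leftLim_le (le_refl (b+1))
        have := hfval (b+1)
        rw [hfa]
        linarith
  -- a.e. lower bound on the rn derivative on Ioo a b
  have hae : ∀ᵐ x, x ∈ Ioo a b → ENNReal.ofReal (2*Q) ≤ μ.rnDeriv volume x := by
    have h0 : ∀ᵐ x, x ∉ ((Set.Icc a b) \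
        {x ∈ Set.Icc a b | DifferentiableAt ℝ v x ∧ deriv v x < 0}) := by
      rw [← MeasureTheory.compl_mem_ae_iff] at hfull
      exact hfull
    filter_upwards [h0, hW.ae_hasDerivAt, Measure.rnDeriv_lt_top μ volume]
      with x hx hWx hlt hmem
    have hxE : DifferentiableAt ℝ v x ∧ deriv v x < 0 := by
      by_contra hcontra
      exact hx ⟨⟨hmem.1.le, hmem.2.le⟩, fun h => hcontra h.2⟩
    -- W = 2Q*id - v near x
    have hEq : W =ᶠ[nhds x] fun y => 2*Q*y - v y := by
      filter_upwards [Ioo_mem_nhds hmem.1 hmem.2] with y hy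
      simp [hWdef, hpid y hy.1.le hy.2.le]
    have hW2 : HasDerivAt (fun y => 2*Q*y - v y) (2*Q - deriv v x) x := by
      exact ((hasDerivAt_id x).const_mul (2*Q)).sub hxE.1.hasDerivAt |>.congr_deriv (by ring)
    have hW3 : HasDerivAt W (2*Q - deriv v x) x := hW2.congr_of_eventuallyEq hEq
    have : (μ.rnDeriv volume x).toReal = 2*Q - deriv v x := by
      exact hWx.unique hW3
    apply ENNReal.ofReal_le_of_le_toReal
    rw [this]; linarith [hxE.2]
  -- lower bound on the measure
  have hmeas_lb : ENNReal.ofReal (2*Q) * ENNReal.ofReal (b - a) ≤ μ (Ioo a b) := by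
    have h1 : ENNReal.ofReal (2*Q) * ENNReal.ofReal (b-a)
        ≤ ∫⁻ x in Ioo a b, μ.rnDeriv volume x := by
      have : ∫⁻ x in Ioo a b, ENNReal.ofReal (2*Q) = ENNReal.ofReal (2*Q) * ENNReal.ofReal (b-a) := by
        rw [setLIntegral_const, Real.volume_Ioo]
      rw [← this]
      exact setLIntegral_mono_ae (by fun_prop) hae
    exact h1.trans (Measure.setLIntegral_rnDeriv_le _)
  -- contradiction
  have hWba : W b - W a = Q * (b - a) := by
    have ha : p a = a := hpid a le_rfl hab.le
    have hb : p b = b := hpid b hab.le le_rfl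
    have : v b - v a = Q * (b - a) := by
      rw [hQdef]; field_simp
    simp only [hWdef, ha, hb]
    nlinarith
  have hfinal : ENNReal.ofReal (2*Q) * ENNReal.ofReal (b-a) ≤ ENNReal.ofReal (Q * (b-a)) := by
    rw [← hWba]; exact hmeas_lb.trans hmeas_ub
  rw [← ENNReal.ofReal_mul (by positivity)] at hfinal
  have := (ENNReal.ofReal_le_ofReal_iff (by positivity)).1 hfinal
  nlinarith
end

section
/- Let Ω be an open subset of ℝⁿ and let (f_m) be a sequence of functions ℝⁿ → ℝ, each differentiable at every point of Ω, such that (f_m) is uniformly Cauchy on Ω and the derivatives are Cauchy in the Lebesgue-essential-supremum sense: essSup_{Ω} ‖∇f_m − ∇f_l‖ → 0 as m, l → ∞ (essential supremum with respect to Lebesgue measure restricted to Ω). Let f be the uniform limit of (f_m). Then f is differentiable at every point of Ω, and moreover f_m → f and ∇f_m → ∇f uniformly on Ω. -/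
open MeasureTheory Filter ENNReal NNReal Topology Set
open scoped Interval

/-! An a.e. bound `‖g'‖ ≤ C` on the derivative of an everywhere differentiable function on an
open set holds at every point. By Fubini, almost every segment parallel to a given one meets the
exceptional null set in a null set of parameters, so integrating `g'` along such segments close
to the given one and passing to the limit shows that `g` is `C`-Lipschitz on balls; hence
`‖g' x‖ ≤ C` everywhere. Applied to `f_m - f_l`, this turns the essential-supremum Cauchy
condition into a uniform Cauchy condition for `∇f_m` on `Ω`, and the theorem on uniform limits
of derivatives concludes. -/

variable {E F : Type*} [NormedAddCommGroup E] [NormedSpace ℝ E]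
  [NormedAddCommGroup F] [NormedSpace ℝ F] [CompleteSpace F]

theorem norm_image_sub_le_of_ae_norm_deriv_le_segment {g : E → F} {g' : E → E →L[ℝ] F}
    {a d : E} {C : ℝ}
    (hg : ∀ t ∈ Icc (0 : ℝ) 1, HasFDerivAt g (g' (a + t • d)) (a + t • d))
    (hae : ∀ᵐ t : ℝ, t ∈ Ioc (0 : ℝ) 1 → ‖g' (a + t • d)‖ ≤ C) :
    ‖g (a + d) - g a‖ ≤ C * ‖d‖ := by
  set h : ℝ → F := fun t => g (a + t • d)
  have hh : ∀ t ∈ Icc (0 : ℝ) 1, HasDerivAt h (g' (a + t • d) d) t := fun t ht =>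
    (hg t ht).comp_hasDerivAt t (by simpa using ((hasDerivAt_id t).smul_const d).const_add a)
  have hbound : ∀ᵐ t, t ∈ Ι (0 : ℝ) 1 → ‖deriv h t‖ ≤ C * ‖d‖ := by
    rw [uIoc_of_le zero_le_one]
    filter_upwards [hae] with t ht hmem
    rw [(hh t (Ioc_subset_Icc_self hmem)).deriv]
    exact (g' _).le_of_opNorm_le (ht hmem) d
  have hint : IntervalIntegrable (deriv h) volume 0 1 :=
    intervalIntegrable_iff.2 <| Measure.integrableOn_of_bounded (by simp)
      (aestronglyMeasurable_deriv h _) ((ae_restrict_iff' measurableSet_uIoc).2 hbound)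
  have hderiv : ∀ t ∈ uIcc (0 : ℝ) 1, HasDerivAt h (deriv h t) t := fun t ht => by
    rw [uIcc_of_le zero_le_one] at ht
    exact (hh t ht).differentiableAt.hasDerivAt
  calc ‖g (a + d) - g a‖ = ‖∫ t in (0 : ℝ)..1, deriv h t‖ := by
        rw [intervalIntegral.integral_eq_sub_of_hasDerivAt hderiv hint]
        simp [h]
    _ ≤ C * ‖d‖ * |1 - 0| := intervalIntegral.norm_integral_le_of_norm_le_const_ae hbound
    _ = C * ‖d‖ := by simp

variable [FiniteDimensional ℝ E] [MeasurableSpace E] [BorelSpace E] (μ : Measure E)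
  [μ.IsAddHaarMeasure]

theorem ae_ae_add_smul_of_ae_s12 {p : E → Prop} (h : ∀ᵐ x ∂μ, p x) (d : E) :
    ∀ᵐ z ∂μ, ∀ᵐ t : ℝ, p (z + t • d) := by
  obtain ⟨N, hpN, hN, hN0⟩ := exists_measurable_superset_of_null (ae_iff.1 h)
  have hline : ∀ᵐ z ∂μ, ∀ᵐ t : ℝ, z + t • d ∉ N := by
    rw [Measure.ae_ae_comm ((measurable_fst.add (measurable_snd.smul_const d)) hN).compl]
    exact .of_forall fun t => by
      rw [ae_iff]
      push Not
      exact (measure_preimage_add_right μ (t • d) N).trans hN0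
  filter_upwards [hline] with z hz
  filter_upwards [hz] with t ht
  by_contra hp
  exact ht (hpN hp)

theorem lipschitzOnWith_of_ae_nnnorm_hasFDerivAt_le {s : Set E} (hs : IsOpen s)
    (hconv : Convex ℝ s) {g : E → F} {g' : E → E →L[ℝ] F}
    (hg : ∀ x ∈ s, HasFDerivAt g (g' x) x) {C : ℝ≥0}
    (hae : ∀ᵐ x ∂μ.restrict s, ‖g' x‖₊ ≤ C) : LipschitzOnWith C g s := by
  refine LipschitzOnWith.of_dist_le_mul fun w hw y hy => ?_
  set d := w - y
  have hseg : ∀ᶠ z in 𝓝 y, ∀ t ∈ Icc (0 : ℝ) 1, z + t • d ∈ s :=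
    isCompact_Icc.eventually_forall_of_forall_eventually fun t ht =>
      (continuous_fst.add (continuous_snd.smul continuous_const)).continuousAt.preimage_mem_nhds
        (hs.mem_nhds (hconv.add_smul_sub_mem hy hw ht))
  have hgood : ∃ᶠ z in 𝓝 y, ∀ᵐ t : ℝ, z + t • d ∈ s → ‖g' (z + t • d)‖₊ ≤ C :=
    mem_closure_iff_frequently.1 <| Measure.dense_of_ae (μ := μ)
      (ae_ae_add_smul_of_ae_s12 μ ((ae_restrict_iff' hs.measurableSet).1 hae) d) y
  have hnear : ∃ᶠ z in 𝓝 y, ‖g (z + d) - g z‖ ≤ C * ‖d‖ := by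
    refine (hgood.and_eventually hseg).mono fun z ⟨hz, hzs⟩ =>
      norm_image_sub_le_of_ae_norm_deriv_le_segment (fun t ht => hg _ (hzs t ht)) ?_
    filter_upwards [hz] with t ht htI using ht (hzs t (Ioc_subset_Icc_self htI))
  have hcont : ContinuousAt (fun z => ‖g (z + d) - g z‖) y :=
    (((hg w hw).continuousAt.comp_of_eq (continuous_add_const d).continuousAt
      (by simp [d])).sub (hg y hy).continuousAt).norm
  rw [dist_eq_norm, dist_eq_norm]
  exact le_of_tendsto_of_frequently (by simpa [d] using hcont.tendsto) hnear

theorem enorm_le_essSup_of_hasFDerivAt {s : Set E} (hs : IsOpen s) {g : E → F}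
    {g' : E → E →L[ℝ] F} (hg : ∀ x ∈ s, HasFDerivAt g (g' x) x) {x : E} (hx : x ∈ s) :
    ‖g' x‖ₑ ≤ essSup (fun y => ‖g' y‖ₑ) (μ.restrict s) := by
  set M := essSup (fun y => ‖g' y‖ₑ) (μ.restrict s)
  rcases eq_or_ne M ⊤ with hM | hM
  · simp [hM]
  obtain ⟨r, hr, hball⟩ := Metric.isOpen_iff.1 hs x hx
  have hae : ∀ᵐ y ∂μ.restrict (Metric.ball x r), ‖g' y‖₊ ≤ M.toNNReal :=
    ae_restrict_of_ae_restrict_of_subset hball <| (ae_le_essSup _).mono fun y hy =>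
      ENNReal.le_toNNReal_of_coe_le hy hM
  have hlip := lipschitzOnWith_of_ae_nnnorm_hasFDerivAt_le μ Metric.isOpen_ball (convex_ball x r)
    (fun y hy => hg y (hball hy)) hae
  rw [← ENNReal.coe_toNNReal hM]
  exact_mod_cast (hg x hx).le_of_lipschitzOn (Metric.ball_mem_nhds x hr) hlip

theorem uniformCauchySeqOn_of_edist_le {ι α β : Type*} [PseudoEMetricSpace β] {G : ι → α → β}
    {p : Filter ι} {s : Set α} {B : ι × ι → ℝ≥0∞} (hB : Tendsto B (p ×ˢ p) (𝓝 0))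
    (h : ∀ i j, ∀ x ∈ s, edist (G i x) (G j x) ≤ B (i, j)) : UniformCauchySeqOn G p s := by
  intro u hu
  obtain ⟨ε, hε, hεu⟩ := mem_uniformity_edist.1 hu
  filter_upwards [hB.eventually (gt_mem_nhds hε)] with ⟨i, j⟩ hij x hx
  exact hεu ((h i j x hx).trans_lt hij)

theorem stmt_12_general {n : ℕ} (Ω : Set (EuclideanSpace ℝ (Fin n))) (hΩ : IsOpen Ω)
    (f : ℕ → EuclideanSpace ℝ (Fin n) → ℝ)
    (F : EuclideanSpace ℝ (Fin n) → ℝ)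
    (hdiff : ∀ m, ∀ x ∈ Ω, DifferentiableAt ℝ (f m) x)
    (hgradCauchy : Tendsto
      (fun p : ℕ × ℕ =>
        essSup (fun x => (‖fderiv ℝ (f p.1) x - fderiv ℝ (f p.2) x‖₊ : ℝ≥0∞))
          (volume.restrict Ω))
      atTop (nhds 0))
    (hlim : TendstoUniformlyOn f F atTop Ω) :
    (∀ x ∈ Ω, DifferentiableAt ℝ F x) ∧
      TendstoUniformlyOn f F atTop Ω ∧
      TendstoUniformlyOn (fun m x => fderiv ℝ (f m) x) (fun x => fderiv ℝ F x) atTop Ω := by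
  have hUC : UniformCauchySeqOn (fun m => fderiv ℝ (f m)) atTop Ω := by
    refine uniformCauchySeqOn_of_edist_le (by rwa [prod_atTop_atTop_eq]) fun m k x hx => ?_
    rw [edist_eq_enorm_sub]
    exact enorm_le_essSup_of_hasFDerivAt volume hΩ
      (fun y hy => (hdiff m y hy).hasFDerivAt.sub (hdiff k y hy).hasFDerivAt) hx
  set G := fun x => limUnder atTop fun m => fderiv ℝ (f m) x
  have hG : TendstoUniformlyOn (fun m => fderiv ℝ (f m)) G atTop Ω :=
    hUC.tendstoUniformlyOn_of_tendsto fun x hx => (hUC.cauchySeq hx).tendsto_limUnder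
  have hF : ∀ x ∈ Ω, HasFDerivAt F (G x) x := fun x hx =>
    hasFDerivAt_of_tendstoUniformlyOn hΩ hG (fun m y hy => (hdiff m y hy).hasFDerivAt)
      (fun y hy => hlim.tendsto_at hy) hx
  exact ⟨fun x hx => (hF x hx).differentiableAt, hlim,
    hG.congr_right fun x hx => (hF x hx).fderiv.symm⟩

/-- `W^{1,∞}` convergence preserves everywhere differentiability: if `(f_m)` are everywhere
differentiable on an open set `Ω ⊆ ℝⁿ`, `(f_m)` is uniformly Cauchy on `Ω`, the derivatives are
Cauchy in the Lebesgue-essential-supremum sense, and `f` is the uniform limit of `(f_m)`, then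
`f` is differentiable at every point of `Ω` and `f_m → f`, `∇f_m → ∇f` uniformly on `Ω`. -/
theorem stmt_12 {n : ℕ} (Ω : Set (EuclideanSpace ℝ (Fin n))) (hΩ : IsOpen Ω)
    (f : ℕ → EuclideanSpace ℝ (Fin n) → ℝ)
    (F : EuclideanSpace ℝ (Fin n) → ℝ)
    (hdiff : ∀ m, ∀ x ∈ Ω, DifferentiableAt ℝ (f m) x)
    (hcauchy : UniformCauchySeqOn f atTop Ω)
    (hgradCauchy : Tendsto
      (fun p : ℕ × ℕ =>
        essSup (fun x => (‖fderiv ℝ (f p.1) x - fderiv ℝ (f p.2) x‖₊ : ℝ≥0∞))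
          (volume.restrict Ω))
      atTop (nhds 0))
    (hlim : TendstoUniformlyOn f F atTop Ω) :
    (∀ x ∈ Ω, DifferentiableAt ℝ F x) ∧
      TendstoUniformlyOn f F atTop Ω ∧
      TendstoUniformlyOn (fun m x => fderiv ℝ (f m) x) (fun x => fderiv ℝ F x) atTop Ω :=
  stmt_12_general Ω hΩ f F hdiff hgradCauchy hlim
end

section
/- Let Ω be an open subset of ℝⁿ and let (f_m) be a sequence of functions ℝⁿ → ℝ that are continuously differentiable on Ω (each f_m is differentiable at every point of Ω and x ↦ ∇f_m(x) is continuous on Ω), such that (f_m) is uniformly Cauchy on Ω and essSup_{Ω} ‖∇f_m − ∇f_l‖ → 0 as m, l → ∞ (essential supremum with respect to Lebesgue measure restricted to Ω). Let f be the uniform limit of (f_m). Then f is continuously differentiable on Ω: f is differentiable at every point of Ω and x ↦ ∇f(x) is continuous on Ω. -/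
open MeasureTheory Filter ENNReal NNReal

/-!
A function continuous on an open set `U` is bounded there, pointwise, by its essential supremum
over `U`, since a set on which it exceeds that supremum would be open, nonempty and null.
Hence essential-supremum Cauchy sequences of continuous derivatives are uniformly Cauchy on `Ω`,
they converge uniformly to a continuous limit, and the classical theorem on uniform limits of
derivatives shows that this limit is the derivative of `F`.
-/

section OpenPosMeasure

variable {X : Type*} [TopologicalSpace X] [MeasurableSpace X] {μ : Measure X}
  [μ.IsOpenPosMeasure] {U : Set X}

theorem ContinuousOn.le_essSup_restrict {β : Type*} [CompleteLinearOrder β] [TopologicalSpace β]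
    [FirstCountableTopology β] [OrderTopology β] {g : X → β} (hU : IsOpen U)
    (hg : ContinuousOn g U) {x : X} (hx : x ∈ U) : g x ≤ essSup g (μ.restrict U) := by
  have hmin : (fun y => min (g y) (essSup g (μ.restrict U))) =ᵐ[μ.restrict U] g :=
    (_root_.ae_le_essSup).mono fun y hy => min_eq_left hy
  exact min_eq_left_iff.mp <| Measure.eqOn_open_of_ae_eq hmin hU
    ((continuous_id.min continuous_const).comp_continuousOn hg) hg hx

theorem uniformCauchySeqOn_of_tendsto_essSup {ι E : Type*} [SeminormedAddCommGroup E]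
    {p : Filter ι} {F : ι → X → E} (hU : IsOpen U) (hF : ∀ i, ContinuousOn (F i) U)
    (hF' : Tendsto (fun q : ι × ι => essSup (fun x => ‖F q.1 x - F q.2 x‖ₑ) (μ.restrict U))
      (p ×ˢ p) (nhds 0)) :
    UniformCauchySeqOn F p U := by
  intro u hu
  obtain ⟨ε, hε, hεu⟩ := mem_uniformity_edist.mp hu
  filter_upwards [hF'.eventually (gt_mem_nhds hε)] with q hq x hx
  apply hεu
  rw [edist_eq_enorm_sub]
  exact lt_of_le_of_lt (((hF q.1).sub (hF q.2)).enorm.le_essSup_restrict hU hx) hq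

end OpenPosMeasure

theorem UniformCauchySeqOn.tendstoUniformlyOn_limUnder {ι X α : Type*} [UniformSpace α]
    [CompleteSpace α] [Nonempty α] {p : Filter ι} [p.NeBot] {F : ι → X → α} {s : Set X}
    (hF : UniformCauchySeqOn F p s) :
    TendstoUniformlyOn F (fun x => limUnder p (F · x)) p s :=
  hF.tendstoUniformlyOn_of_tendsto fun _ hx =>
    tendsto_nhds_limUnder (cauchy_map_iff_exists_tendsto.mp (hF.cauchy_map hx))

theorem differentiableAt_and_continuousOn_fderiv_of_uniformCauchySeqOn {ι 𝕜 E G : Type*}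
    [NontriviallyNormedField 𝕜] [IsRCLikeNormedField 𝕜] [NormedAddCommGroup E] [NormedSpace 𝕜 E]
    [NormedAddCommGroup G] [NormedSpace 𝕜 G] [CompleteSpace G] {l : Filter ι} [l.NeBot]
    {f : ι → E → G} {F : E → G} {U : Set E} (hU : IsOpen U)
    (hdiff : ∀ i, ∀ x ∈ U, DifferentiableAt 𝕜 (f i) x)
    (hcont : ∀ i, ContinuousOn (fderiv 𝕜 (f i)) U)
    (hf' : UniformCauchySeqOn (fun i => fderiv 𝕜 (f i)) l U)
    (hlim : ∀ x ∈ U, Tendsto (fun i => f i x) l (nhds (F x))) :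
    (∀ x ∈ U, DifferentiableAt 𝕜 F x) ∧ ContinuousOn (fderiv 𝕜 F) U := by
  have hunif := hf'.tendstoUniformlyOn_limUnder
  have hF : ∀ x ∈ U, HasFDerivAt F (limUnder l fun i => fderiv 𝕜 (f i) x) x := fun x hx =>
    hasFDerivAt_of_tendstoUniformlyOn hU hunif (fun i y hy => (hdiff i y hy).hasFDerivAt) hlim hx
  refine ⟨fun x hx => (hF x hx).differentiableAt, ?_⟩
  exact (hunif.continuousOn (Frequently.of_forall hcont)).congr fun x hx => (hF x hx).fderiv

theorem stmt_13_general {n : ℕ} (Ω : Set (EuclideanSpace ℝ (Fin n))) (hΩ : IsOpen Ω)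
    (f : ℕ → EuclideanSpace ℝ (Fin n) → ℝ)
    (F : EuclideanSpace ℝ (Fin n) → ℝ)
    (hdiff : ∀ m, ∀ x ∈ Ω, DifferentiableAt ℝ (f m) x)
    (hcont : ∀ m, ContinuousOn (fun x => fderiv ℝ (f m) x) Ω)
    (hgradCauchy : Tendsto
      (fun p : ℕ × ℕ =>
        essSup (fun x => (‖fderiv ℝ (f p.1) x - fderiv ℝ (f p.2) x‖₊ : ℝ≥0∞))
          (volume.restrict Ω))
      atTop (nhds 0))
    (hlim : TendstoUniformlyOn f F atTop Ω) :
    (∀ x ∈ Ω, DifferentiableAt ℝ F x) ∧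
      ContinuousOn (fun x => fderiv ℝ F x) Ω := by
  rw [← prod_atTop_atTop_eq] at hgradCauchy
  have hf' : UniformCauchySeqOn (fun m => fderiv ℝ (f m)) atTop Ω :=
    uniformCauchySeqOn_of_tendsto_essSup hΩ hcont hgradCauchy
  exact differentiableAt_and_continuousOn_fderiv_of_uniformCauchySeqOn hΩ hdiff hcont hf'
    fun x hx => hlim.tendsto_at hx

/-- `C¹(Ω) ∩ W^{1,∞}(Ω)` is closed in `W^{1,∞}(Ω)`: if `(f_m)` are continuously differentiable
on an open set `Ω ⊆ ℝⁿ`, `(f_m)` is uniformly Cauchy on `Ω`, the derivatives are Cauchy in the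
Lebesgue-essential-supremum sense, and `f` is the uniform limit of `(f_m)`, then `f` is
continuously differentiable on `Ω`. -/
theorem stmt_13 {n : ℕ} (Ω : Set (EuclideanSpace ℝ (Fin n))) (hΩ : IsOpen Ω)
    (f : ℕ → EuclideanSpace ℝ (Fin n) → ℝ)
    (F : EuclideanSpace ℝ (Fin n) → ℝ)
    (hdiff : ∀ m, ∀ x ∈ Ω, DifferentiableAt ℝ (f m) x)
    (hcont : ∀ m, ContinuousOn (fun x => fderiv ℝ (f m) x) Ω)
    (hcauchy : UniformCauchySeqOn f atTop Ω)
    (hgradCauchy : Tendsto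
      (fun p : ℕ × ℕ =>
        essSup (fun x => (‖fderiv ℝ (f p.1) x - fderiv ℝ (f p.2) x‖₊ : ℝ≥0∞))
          (volume.restrict Ω))
      atTop (nhds 0))
    (hlim : TendstoUniformlyOn f F atTop Ω) :
    (∀ x ∈ Ω, DifferentiableAt ℝ F x) ∧
      ContinuousOn (fun x => fderiv ℝ F x) Ω :=
  stmt_13_general Ω hΩ f F hdiff hcont hgradCauchy hlim
end
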